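/- Fix positive integers M, N, R, V ∈ ℝ^{M×N}, and W ∈ ℝ^{M×R} with W ≠ O. For all H₁, H₂ ∈ ℝ^{R×N}, (H₁ − H₂)•(Wᵀ(WH₁ − V) − Wᵀ(WH₂ − V)) ≥ (1/‖WᵀW‖_F)·‖Wᵀ(WH₁ − V) − Wᵀ(WH₂ − V)‖_F²; that is, the gradient map H ↦ Wᵀ(WH − V) is inverse-strongly monotone with constant 1/‖WᵀW‖_F. -/

import Mathlib

/-!
With `D = H₁ - H₂` and `U = W D`, the gradient difference is `Wᵀ U`, and the claim reads
`‖U‖² ≥ ‖Wᵀ U‖² / ‖Wᵀ W‖`. Writing `‖Wᵀ U‖² = tr (U Uᵀ W Wᵀ) = (U Uᵀ) • (W Wᵀ)`, Cauchy–Schwarz and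
submultiplicativity of the Frobenius norm bound it by `‖U‖² ‖W Wᵀ‖ = ‖U‖² ‖Wᵀ W‖`.
-/

open Matrix

/-- Frobenius norm of a real matrix. -/
noncomputable def frob {m n : Type*} [Fintype m] [Fintype n] (X : Matrix m n ℝ) : ℝ :=
  Real.sqrt (∑ i, ∑ j, (X i j) ^ 2)

/-- Frobenius inner product of two real matrices. -/
noncomputable def fip {m n : Type*} [Fintype m] [Fintype n] (X Y : Matrix m n ℝ) : ℝ :=
  ∑ i, ∑ j, X i j * Y i j

namespace Matrix

variable {l m n : Type*} [Fintype l] [Fintype m] [Fintype n]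

attribute [local instance] frobeniusSeminormedAddCommGroup

lemma frob_eq_norm (X : Matrix m n ℝ) : frob X = ‖X‖ := by
  rw [frobenius_norm_def, frob, Real.sqrt_eq_rpow]
  simp only [Real.norm_eq_abs, Real.rpow_two, sq_abs]

lemma frob_nonneg (X : Matrix m n ℝ) : 0 ≤ frob X := Real.sqrt_nonneg _

lemma frob_mul_le (X : Matrix l m ℝ) (Y : Matrix m n ℝ) : frob (X * Y) ≤ frob X * frob Y := by
  simpa only [frob_eq_norm] using frobenius_norm_mul X Y

lemma frob_transpose (X : Matrix m n ℝ) : frob Xᵀ = frob X := by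
  simpa only [frob_eq_norm] using frobenius_norm_transpose X

lemma fip_eq_trace (X Y : Matrix m n ℝ) : fip X Y = trace (Xᵀ * Y) := by
  simp only [fip, trace, diag, mul_apply, transpose_apply]
  exact Finset.sum_comm

lemma frob_sq (X : Matrix m n ℝ) : frob X ^ 2 = fip X X := by
  rw [frob, Real.sq_sqrt (by positivity)]
  simp only [fip, sq]

lemma fip_le_frob_mul_frob (X Y : Matrix m n ℝ) : fip X Y ≤ frob X * frob Y := by
  simpa only [fip, frob, Fintype.sum_prod_type] using
    Real.sum_mul_le_sqrt_mul_sqrt Finset.univ (fun p : m × n => X p.1 p.2) (fun p => Y p.1 p.2)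

lemma frob_transpose_mul_sq (W : Matrix m l ℝ) (U : Matrix m n ℝ) :
    frob (Wᵀ * U) ^ 2 = fip (U * Uᵀ) (W * Wᵀ) := by
  rw [frob_sq, fip_eq_trace, fip_eq_trace, transpose_mul, transpose_mul, transpose_transpose,
    transpose_transpose, ← Matrix.mul_assoc, trace_mul_comm, ← Matrix.mul_assoc,
    ← Matrix.mul_assoc, Matrix.mul_assoc]

lemma frob_mul_transpose_self (W : Matrix m l ℝ) : frob (W * Wᵀ) = frob (Wᵀ * W) := by
  have h : frob (W * Wᵀ) ^ 2 = frob (Wᵀ * W) ^ 2 := by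
    rw [frob_sq, frob_sq, fip_eq_trace, fip_eq_trace, transpose_mul, transpose_mul,
      transpose_transpose, ← Matrix.mul_assoc, trace_mul_comm, Matrix.mul_assoc,
      Matrix.mul_assoc]
  exact (pow_left_inj₀ (frob_nonneg _) (frob_nonneg _) two_ne_zero).mp h

lemma frob_transpose_mul_sq_le (W : Matrix m l ℝ) (U : Matrix m n ℝ) :
    frob (Wᵀ * U) ^ 2 ≤ frob U ^ 2 * frob (Wᵀ * W) :=
  calc frob (Wᵀ * U) ^ 2 = fip (U * Uᵀ) (W * Wᵀ) := frob_transpose_mul_sq W U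
    _ ≤ frob (U * Uᵀ) * frob (W * Wᵀ) := fip_le_frob_mul_frob _ _
    _ ≤ frob U * frob Uᵀ * frob (W * Wᵀ) := by gcongr; exacts [frob_nonneg _, frob_mul_le _ _]
    _ = frob U ^ 2 * frob (Wᵀ * W) := by rw [frob_transpose, frob_mul_transpose_self]; ring

lemma fip_transpose_mul_mul (W : Matrix m l ℝ) (D : Matrix l n ℝ) :
    fip D (Wᵀ * (W * D)) = frob (W * D) ^ 2 := by
  rw [fip_eq_trace, frob_sq, fip_eq_trace, transpose_mul, Matrix.mul_assoc]

lemma one_div_frob_mul_frob_sq_le_fip (W : Matrix m l ℝ) (D : Matrix l n ℝ) :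
    1 / frob (Wᵀ * W) * frob (Wᵀ * (W * D)) ^ 2 ≤ fip D (Wᵀ * (W * D)) := by
  rw [fip_transpose_mul_mul, one_div_mul_eq_div]
  exact div_le_of_le_mul₀ (frob_nonneg _) (by positivity) (frob_transpose_mul_sq_le W (W * D))

end Matrix

theorem stmt_3_general (M N R : ℕ)
    (V : Matrix (Fin M) (Fin N) ℝ) (W : Matrix (Fin M) (Fin R) ℝ)
    (H₁ H₂ : Matrix (Fin R) (Fin N) ℝ) :
    fip (H₁ - H₂) (Wᵀ * (W * H₁ - V) - Wᵀ * (W * H₂ - V)) ≥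
      (1 / frob (Wᵀ * W)) * frob (Wᵀ * (W * H₁ - V) - Wᵀ * (W * H₂ - V)) ^ 2 := by
  have hgrad : Wᵀ * (W * H₁ - V) - Wᵀ * (W * H₂ - V) = Wᵀ * (W * (H₁ - H₂)) := by
    simp only [Matrix.mul_sub]
    abel
  rw [hgrad]
  exact one_div_frob_mul_frob_sq_le_fip W (H₁ - H₂)

theorem stmt_3 (M N R : ℕ) (hM : 0 < M) (hN : 0 < N) (hR : 0 < R)
    (V : Matrix (Fin M) (Fin N) ℝ) (W : Matrix (Fin M) (Fin R) ℝ) (hW : W ≠ 0)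
    (H₁ H₂ : Matrix (Fin R) (Fin N) ℝ) :
    fip (H₁ - H₂) (Wᵀ * (W * H₁ - V) - Wᵀ * (W * H₂ - V)) ≥
      (1 / frob (Wᵀ * W)) * frob (Wᵀ * (W * H₁ - V) - Wᵀ * (W * H₂ - V)) ^ 2 :=
  stmt_3_general M N R V W H₁ H₂
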